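/- The occlusion process inherits integral-probability-metric convergence: suppose there exist C_μ > 0 and r : ℕ\{0} → [0,∞) such that for every f : X → [0,1] measurable and every t ≥ 1, |μK^t(f) − P(f)| ≤ C_μ r(t). Then for every initial probability measure ν on X × {0,1} × X whose first marginal is μ, every f : X → [0,1] measurable, and every t ≥ 1, the function g(x,s,y) := 1{s=0}f(x) + 1{s=1}f(y) satisfies |νK_occ^t(g) − P_occ(g)| ≤ C_μ r(t). -/

import Mathlib

open MeasureTheory ProbabilityTheory Filter

noncomputable section

namespace OcclusionPaper

variable {X : Type*} [MeasurableSpace X]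

/-- The mean `μ_i = P_i(f)` of `f` under `P_i`, i.e. `P` conditioned to the region `A i`. -/
def regionMean (P : Measure X) {R : ℕ} (A : Fin R → Set X) (f : X → ℝ) (i : Fin R) : ℝ :=
  ∫ x, f x ∂(P[|A i])

/-- The resolution `→Pf(x) = ∑ i, μ_i 1{x ∈ A i}`. -/
def res (P : Measure X) {R : ℕ} (A : Fin R → Set X) (f : X → ℝ) : X → ℝ :=
  fun x => ∑ i, Set.indicator (A i) (fun _ => regionMean P A f i) x

/-- The orthogonal counterpart `←Pf = f − →Pf`. -/
def orth (P : Measure X) {R : ℕ} (A : Fin R → Set X) (f : X → ℝ) : X → ℝ :=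
  fun x => f x - res P A f x

/-- Covariance of `g` and `h` under `P`. -/
def covP {Y : Type*} [MeasurableSpace Y] (P : Measure Y) (g h : Y → ℝ) : ℝ :=
  (∫ y, g y * h y ∂P) - (∫ y, g y ∂P) * (∫ y, h y ∂P)

/-- Action of the `k`-th iterate of a (measure-valued) transition kernel on a function:
`K^k g`. -/
def kerIter {Y : Type*} [MeasurableSpace Y] (κ : Y → Measure Y) : ℕ → (Y → ℝ) → Y → ℝ
  | 0, g => g
  | (k + 1), g => fun y => ∫ z, kerIter κ k g z ∂(κ y)

/-- The joint law of the first `n` steps `(X_1, …, X_n)` of a Markov chain with initial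
distribution `μ` and transition kernel `κ`. -/
def chainLawF {Y : Type*} [MeasurableSpace Y] (μ : Measure Y) (κ : Y → Measure Y) :
    (n : ℕ) → Measure (Fin n → Y)
  | 0 => Measure.dirac (fun i : Fin 0 => i.elim0)
  | 1 => μ.map (fun x _ => x)
  | (n + 2) => (chainLawF μ κ (n + 1)).bind
      (fun xs => (κ (xs (Fin.last n))).map (fun z => Fin.snoc xs z))

/-- The distribution `μ K^t` of a Markov chain with kernel `κ` after `t` steps from `μ`. -/
def evolveF {Y : Type*} [MeasurableSpace Y] (κ : Y → Measure Y) (μ : Measure Y) : ℕ → Measure Y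
  | 0 => μ
  | (t + 1) => (evolveF κ μ t).bind κ

/-- `N_i`: the number of times the finite trajectory `xs` visits region `A i`. -/
def Nreg {R n : ℕ} (A : Fin R → Set X) (xs : Fin n → X) (i : Fin R) : ℕ :=
  ∑ t : Fin n, Set.indicator (A i) (fun _ => (1 : ℕ)) (xs t)

/-- The fully occluded (ideal) estimator
`μ̂_ideal = n⁻¹ ∑_{i=1}^R ∑_{j=1}^{N_i} f(Y_{ij})`, evaluated on an outcome consisting of the
chain trajectory together with, for each region, an array of draws from `P_i`. -/
def idealEst {R n : ℕ} (A : Fin R → Set X) (f : X → ℝ)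
    (ω : (Fin n → X) × (Fin R → Fin n → X)) : ℝ :=
  (n : ℝ)⁻¹ * ∑ i : Fin R, ∑ j : Fin n, if (j : ℕ) < Nreg A ω.1 i then f (ω.2 i j) else 0

/-- The joint law of the chain `(X_1,…,X_n)` together with, for each region `i`, an i.i.d.
array `(Y_{ij})_j` of draws from `P_i`, independent of the chain (hence in particular
conditionally independent of it given the visited regions). -/
def jointLaw (P : Measure X) {R : ℕ} (A : Fin R → Set X) (κ : X → Measure X) (n : ℕ) :
    Measure ((Fin n → X) × (Fin R → Fin n → X)) :=
  (chainLawF P κ n).prod (Measure.pi fun i => Measure.pi fun _ : Fin n => P[|A i])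

/-- Bernoulli distribution on `Bool` with success probability `p` (`true` has mass `p`). -/
def bern (p : ℝ) : Measure Bool :=
  ENNReal.ofReal p • Measure.dirac true + ENNReal.ofReal (1 - p) • Measure.dirac false

/-- The conditional law of the pair `(s, y)` given the current chain position `x`:
`s ~ Bernoulli(α(ρ x))` and `y ~ P_{ρ x}` independently. -/
def mark (P : Measure X) {R : ℕ} (A : Fin R → Set X) (ρ : X → Fin R) (α : Fin R → ℝ) (x : X) :
    Measure (Bool × X) :=
  (bern (α (ρ x))).prod (P[|A (ρ x)])

/-- The occlusion kernel `K_occ((x,s,y) → (dx',s',dy'))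
 = K(x → dx')·(α(ρ x')1{s'=1} + (1−α(ρ x'))1{s'=0})·P_{ρ x'}(dy')`. -/
def Kocc (P : Measure X) {R : ℕ} (A : Fin R → Set X) (ρ : X → Fin R) (α : Fin R → ℝ)
    (κ : X → Measure X) : X × Bool × X → Measure (X × Bool × X) :=
  fun z => (κ z.1).bind fun x' => (mark P A ρ α x').map fun sy => (x', sy.1, sy.2)

/-- The measure `P_occ(dx,s,dy) = P(dx)·(α(ρ x)1{s=1} + (1−α(ρ x))1{s=0})·P_{ρ x}(dy)`. -/
def Pocc (P : Measure X) {R : ℕ} (A : Fin R → Set X) (ρ : X → Fin R) (α : Fin R → ℝ) :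
    Measure (X × Bool × X) :=
  P.bind fun x => (mark P A ρ α x).map fun sy => (x, sy.1, sy.2)

/-- `f_occ(x,s,y) = 1{s=0} f(x) + 1{s=1} f(y)`. -/
def focc (f : X → ℝ) : X × Bool × X → ℝ :=
  fun z => if z.2.1 then f z.2.2 else f z.1

/-- `f_α(x) = (1 − α(ρ x)) f(x) + α(ρ x) →Pf(x)`. -/
def falpha (P : Measure X) {R : ℕ} (A : Fin R → Set X) (ρ : X → Fin R) (α : Fin R → ℝ)
    (f : X → ℝ) : X → ℝ :=
  fun x => (1 - α (ρ x)) * f x + α (ρ x) * res P A f x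

/-- `f_a(x) = (1 − α(ρ x)) f(x)`. -/
def fa {R : ℕ} (ρ : X → Fin R) (α : Fin R → ℝ) (f : X → ℝ) : X → ℝ :=
  fun x => (1 - α (ρ x)) * f x

end OcclusionPaper

/-!
After its first step the occluded chain started from `ν` is the `K`-chain started from the first
marginal `μ` of `ν`, followed by a fresh mark `(s, y)` drawn at the current position; likewise
`P_occ` is `P` followed by a mark. Both integrals of `g` therefore equal integrals, under `μK^t`
and under `P`, of the mark-average `x ↦ E[g | x]`, which is measurable with values in `[0, 1]`;
the hypothesis applied to this function gives the bound.
-/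

namespace OcclusionPaper

section Giry

variable {β γ δ : Type*} [MeasurableSpace β] [MeasurableSpace γ] [MeasurableSpace δ]

lemma bind_map_eq_bind_comp (m : Measure β) {g : β → γ} (hg : Measurable g)
    {κ : γ → Measure δ} (hκ : Measurable κ) :
    (m.map g).bind κ = m.bind fun b => κ (g b) := by
  ext s hs
  rw [Measure.bind_apply hs hκ.aemeasurable,
    Measure.bind_apply (f := fun b => κ (g b)) hs (hκ.comp hg).aemeasurable]
  exact lintegral_map ((Measure.measurable_coe hs).comp hκ) hg

lemma bind_comp_eq_of_map_eq_dirac {σ : Measure β} {π : β → γ} (hπ : Measurable π)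
    {Λ : γ → Measure δ} (hΛ : Measurable Λ) {x : γ} (hσ : σ.map π = Measure.dirac x) :
    σ.bind (fun b => Λ (π b)) = Λ x := by
  rw [← bind_map_eq_bind_comp σ hπ hΛ, hσ, Measure.dirac_bind hΛ]

lemma integral_bind {m : Measure β} [SFinite m] {κ : β → Measure γ} (hκ : Measurable κ)
    (hκ1 : ∀ b, IsProbabilityMeasure (κ b)) {g : γ → ℝ} (hg : Integrable g (m.bind κ)) :
    ∫ y, g y ∂(m.bind κ) = ∫ b, ∫ y, g y ∂(κ b) ∂m := by
  let κ' : Kernel β γ := ⟨κ, hκ⟩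
  have : IsMarkovKernel κ' := ⟨hκ1⟩
  have hcomp : m.bind κ = (κ' ∘ₖ Kernel.const Unit m) () := by
    rw [← Measure.comp_eq_comp_const_apply]
    rfl
  rw [hcomp] at hg ⊢
  exact Kernel.integral_comp hg

lemma integral_mem_Icc_of_mem_Icc (ν : Measure β) [IsProbabilityMeasure ν] {g : β → ℝ}
    (hg01 : ∀ x, g x ∈ Set.Icc (0 : ℝ) 1) :
    ∫ x, g x ∂ν ∈ Set.Icc (0 : ℝ) 1 := by
  refine ⟨integral_nonneg fun x => (hg01 x).1, ?_⟩
  calc ∫ x, g x ∂ν ≤ ∫ _, (1 : ℝ) ∂ν :=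
        integral_mono_of_nonneg (ae_of_all _ fun x => (hg01 x).1) (integrable_const 1)
          (ae_of_all _ fun x => (hg01 x).2)
    _ = 1 := by simp

end Giry

section Chain

variable {X Y : Type*} [MeasurableSpace X] [MeasurableSpace Y]

lemma isProbabilityMeasure_evolveF {κ : X → Measure X} (hκ : Measurable κ)
    (hκ1 : ∀ x, IsProbabilityMeasure (κ x)) (μ : Measure X) [IsProbabilityMeasure μ] :
    ∀ t, IsProbabilityMeasure (evolveF κ μ t)
  | 0 => ‹_›
  | t + 1 =>
    have := isProbabilityMeasure_evolveF hκ hκ1 μ t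
    isProbabilityMeasure_bind hκ.aemeasurable (ae_of_all _ hκ1)

theorem evolveF_succ_eq_bind {κ : X → Measure X} (hκ : Measurable κ)
    {σ : X → Measure Y} (hσ : Measurable σ) {π : Y → X} (hπ : Measurable π)
    (hσπ : ∀ x, (σ x).map π = Measure.dirac x) (ν : Measure Y) (t : ℕ) :
    evolveF (fun z => (κ (π z)).bind σ) ν (t + 1) = (evolveF κ (ν.map π) (t + 1)).bind σ := by
  have hΛ : Measurable fun x => (κ x).bind σ := (Measure.measurable_bind' hσ).comp hκ
  induction t with
  | zero =>
    change ν.bind _ = ((ν.map π).bind κ).bind σ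
    rw [Measure.bind_bind hκ.aemeasurable hσ.aemeasurable, bind_map_eq_bind_comp ν hπ hΛ]
  | succ t ih =>
    change (evolveF _ ν (t + 1)).bind _ = ((evolveF κ (ν.map π) (t + 1)).bind κ).bind σ
    rw [ih, Measure.bind_bind (g := fun z => (κ (π z)).bind σ) hσ.aemeasurable
        (hΛ.comp hπ).aemeasurable,
      Measure.bind_bind hκ.aemeasurable hσ.aemeasurable]
    congr 1
    funext x
    -- `σ x` lives on the fibre over `x`, so a step taken from a point drawn by `σ x` is a
    -- step taken from `x`.
    exact bind_comp_eq_of_map_eq_dirac hπ hΛ (hσπ x)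

end Chain

lemma focc_mem_Icc {X : Type*} {f : X → ℝ} (hf01 : ∀ x, f x ∈ Set.Icc (0 : ℝ) 1)
    (z : X × Bool × X) : focc f z ∈ Set.Icc (0 : ℝ) 1 := by
  unfold focc
  split_ifs
  exacts [hf01 _, hf01 _]

section Occlusion

variable {X : Type*} [MeasurableSpace X] (P : Measure X) {R : ℕ} (A : Fin R → Set X)
  (ρ : X → Fin R) (α : Fin R → ℝ)

def markAt (x : X) : Measure (X × Bool × X) :=
  (mark P A ρ α x).map fun sy => (x, sy.1, sy.2)

lemma Kocc_eq_bind_markAt (κ : X → Measure X) :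
    Kocc P A ρ α κ = fun z => (κ z.1).bind (markAt P A ρ α) :=
  rfl

lemma Pocc_eq_bind_markAt : Pocc P A ρ α = P.bind (markAt P A ρ α) :=
  rfl

variable {P A ρ α}

lemma isProbabilityMeasure_bern {p : ℝ} (hp0 : 0 ≤ p) (hp1 : p ≤ 1) :
    IsProbabilityMeasure (bern p) := by
  constructor
  simp only [bern, Measure.coe_add, Pi.add_apply, Measure.smul_apply, smul_eq_mul,
    measure_univ, mul_one]
  rw [← ENNReal.ofReal_add hp0 (by linarith)]
  norm_num

lemma isProbabilityMeasure_mark [IsFiniteMeasure P] (hpos : ∀ i, 0 < P (A i))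
    (hα0 : ∀ i, 0 ≤ α i) (hα1 : ∀ i, α i ≤ 1) (x : X) :
    IsProbabilityMeasure (mark P A ρ α x) :=
  have := isProbabilityMeasure_bern (hα0 (ρ x)) (hα1 (ρ x))
  have := cond_isProbabilityMeasure (μ := P) (hpos (ρ x)).ne'
  inferInstanceAs (IsProbabilityMeasure ((bern (α (ρ x))).prod (P[|A (ρ x)])))

lemma measurable_focc {f : X → ℝ} (hf : Measurable f) : Measurable (focc f) :=
  Measurable.ite ((measurable_fst.comp measurable_snd) (measurableSet_singleton true))
    (hf.comp (measurable_snd.comp measurable_snd)) (hf.comp measurable_fst)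

variable [∀ x, IsProbabilityMeasure (mark P A ρ α x)]

instance isProbabilityMeasure_markAt (x : X) : IsProbabilityMeasure (markAt P A ρ α x) :=
  Measure.isProbabilityMeasure_map (by fun_prop)

lemma map_fst_markAt (x : X) : (markAt P A ρ α x).map Prod.fst = Measure.dirac x := by
  rw [markAt, Measure.map_map measurable_fst (by fun_prop)]
  simp [Function.comp_def, Measure.map_const]

lemma measurable_markAt (hρm : Measurable ρ) : Measurable (markAt P A ρ α) := by
  let markKernel : Kernel X (Bool × X) :=
    ⟨mark P A ρ α, (measurable_of_countable fun i => (bern (α i)).prod (P[|A i])).comp hρm⟩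
  have : IsMarkovKernel markKernel := ⟨inferInstance⟩
  have hgraph : markAt P A ρ α = Kernel.id ×ₖ markKernel := by
    funext x
    rw [Kernel.prod_apply, Kernel.id_apply, Measure.dirac_prod]
    rfl
  rw [hgraph]
  exact (Kernel.id ×ₖ markKernel).measurable

lemma measurable_integral_markAt (hρm : Measurable ρ) {g : X × Bool × X → ℝ}
    (hg : Measurable g) : Measurable fun x => ∫ z, g z ∂(markAt P A ρ α x) :=
  (hg.stronglyMeasurable.integral_kernel (κ := ⟨_, measurable_markAt hρm⟩)).measurable

lemma integral_bind_markAt (hρm : Measurable ρ) {g : X × Bool × X → ℝ} (hg : Measurable g)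
    (hg01 : ∀ z, g z ∈ Set.Icc (0 : ℝ) 1) (m : Measure X) [IsProbabilityMeasure m] :
    ∫ z, g z ∂(m.bind (markAt P A ρ α)) = ∫ x, ∫ z, g z ∂(markAt P A ρ α x) ∂m := by
  have hσ := measurable_markAt (P := P) (A := A) (α := α) hρm
  have := isProbabilityMeasure_bind (m := m) hσ.aemeasurable (ae_of_all _ inferInstance)
  refine integral_bind hσ inferInstance
    (Integrable.of_bound hg.aestronglyMeasurable 1 (ae_of_all _ fun z => ?_))
  rw [Real.norm_eq_abs, abs_le]
  exact ⟨by linarith [(hg01 z).1], (hg01 z).2⟩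

end Occlusion

theorem ipm_convergence_inheritance_general
    {X : Type*} [MeasurableSpace X]
    (P : Measure X) [IsProbabilityMeasure P] {R : ℕ} (A : Fin R → Set X)
    (hpos : ∀ i, 0 < P (A i))
    (ρ : X → Fin R) (hρm : Measurable ρ)
    (α : Fin R → ℝ) (hα0 : ∀ i, 0 ≤ α i) (hα1 : ∀ i, α i ≤ 1)
    (K : Kernel X X) [IsMarkovKernel K]
    (μ : Measure X) [IsProbabilityMeasure μ]
    (Cμ : ℝ) (r : ℕ → ℝ)
    (hconv : ∀ f : X → ℝ, Measurable f → (∀ x, f x ∈ Set.Icc (0 : ℝ) 1) →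
      ∀ t, 1 ≤ t →
        |(∫ x, f x ∂(evolveF (fun x => K x) μ t)) - ∫ x, f x ∂P| ≤ Cμ * r t) :
    ∀ ν : Measure (X × Bool × X), IsProbabilityMeasure ν →
      (ν.map fun z => z.1) = μ →
      ∀ f : X → ℝ, Measurable f → (∀ x, f x ∈ Set.Icc (0 : ℝ) 1) →
      ∀ t, 1 ≤ t →
        |(∫ z, focc f z ∂(evolveF (Kocc P A ρ α (fun x => K x)) ν t))
            - ∫ z, focc f z ∂(Pocc P A ρ α)| ≤ Cμ * r t := by
  intro ν _ hνμ f hf hf01 t ht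
  obtain ⟨n, rfl⟩ : ∃ n, t = n + 1 := ⟨t - 1, by omega⟩
  have := isProbabilityMeasure_mark (ρ := ρ) hpos hα0 hα1
  have := isProbabilityMeasure_evolveF K.measurable (fun x => inferInstance) μ (n + 1)
  have hchain : evolveF (Kocc P A ρ α (fun x => K x)) ν (n + 1)
      = (evolveF (fun x => K x) μ (n + 1)).bind (markAt P A ρ α) := by
    rw [Kocc_eq_bind_markAt, ← hνμ]
    exact evolveF_succ_eq_bind K.measurable (measurable_markAt hρm) measurable_fst
      map_fst_markAt ν n
  have hfocc := measurable_focc hf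
  have hfocc01 := focc_mem_Icc hf01
  rw [hchain, Pocc_eq_bind_markAt, integral_bind_markAt hρm hfocc hfocc01,
    integral_bind_markAt hρm hfocc hfocc01]
  exact hconv _ (measurable_integral_markAt hρm hfocc)
    (fun x => integral_mem_Icc_of_mem_Icc _ hfocc01) (n + 1) ht

/-- The occlusion process inherits integral-probability-metric (total
variation type) convergence: if `|μK^t(f) − P(f)| ≤ C_μ r(t)` for all measurable
`f : X → [0,1]` and `t ≥ 1`, then for every initial law `ν` on the extended space whose
first marginal is `μ`, `|νK_occ^t(g) − P_occ(g)| ≤ C_μ r(t)` for the corresponding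
`g(x,s,y) = 1{s=0}f(x) + 1{s=1}f(y)`. -/
theorem ipm_convergence_inheritance
    {X : Type*} [MeasurableSpace X]
    (P : Measure X) [IsProbabilityMeasure P] {R : ℕ} (A : Fin R → Set X)
    (hA : ∀ i, MeasurableSet (A i))
    (hdisj : Pairwise fun i j => Disjoint (A i) (A j))
    (hcover : (⋃ i, A i) = Set.univ)
    (hpos : ∀ i, 0 < P (A i))
    (ρ : X → Fin R) (hρm : Measurable ρ) (hρ : ∀ x, x ∈ A (ρ x))
    (α : Fin R → ℝ) (hα0 : ∀ i, 0 ≤ α i) (hα1 : ∀ i, α i ≤ 1)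
    (K : Kernel X X) [IsMarkovKernel K] (hK : K.Invariant P)
    (μ : Measure X) [IsProbabilityMeasure μ]
    (Cμ : ℝ) (hC : 0 < Cμ) (r : ℕ → ℝ) (hr : ∀ t, 0 ≤ r t)
    (hconv : ∀ f : X → ℝ, Measurable f → (∀ x, f x ∈ Set.Icc (0 : ℝ) 1) →
      ∀ t, 1 ≤ t →
        |(∫ x, f x ∂(evolveF (fun x => K x) μ t)) - ∫ x, f x ∂P| ≤ Cμ * r t) :
    ∀ ν : Measure (X × Bool × X), IsProbabilityMeasure ν →
      (ν.map fun z => z.1) = μ →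
      ∀ f : X → ℝ, Measurable f → (∀ x, f x ∈ Set.Icc (0 : ℝ) 1) →
      ∀ t, 1 ≤ t →
        |(∫ z, focc f z ∂(evolveF (Kocc P A ρ α (fun x => K x)) ν t))
            - ∫ z, focc f z ∂(Pocc P A ρ α)| ≤ Cμ * r t :=
  ipm_convergence_inheritance_general P A hpos ρ hρm α hα0 hα1 K μ Cμ r hconv

end OcclusionPaper
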